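/- arXiv:2002.10077 — 6 statements merged into one kernel-verified Lean document; each statement's English description precedes it below -/
import Mathlib

section
/- Let x_1, ..., x_k and theta_full, theta_lko be vectors in R^d, let V = span(x_1, ..., x_k), and let theta_res = theta_full + P_V(theta_lko - theta_full), where P_V is the orthogonal projection onto V. Let theta_approx = theta_T be the result of any gradient-based update: theta_0 = theta_full and theta_{t+1} = theta_t - alpha_t * sum_{(x,y) in D_t} (<theta_t, x> - y) x, where each alpha_t is a real number and each D_t is a finite set of pairs (x, y) with x in {x_1, ..., x_k} and y in R. Then ||theta_lko - theta_res|| <= ||theta_lko - theta_approx|| (Euclidean norm). -/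
/-!
Every gradient step on the square loss moves along a combination of the feature vectors, so all
iterates stay in the affine subspace `θ_full + V`. The residual update `θ_res` is the point of that
affine subspace nearest to `θ_lko`, because `θ_lko - θ_res = u - P_V u` with `u = θ_lko - θ_full`.
-/

open RealInnerProductSpace

variable {E : Type*} [NormedAddCommGroup E] [InnerProductSpace ℝ E]

theorem Submodule.norm_sub_starProjection_le (K : Submodule ℝ E) [K.HasOrthogonalProjection]
    (u : E) {v : E} (hv : v ∈ K) : ‖u - K.starProjection u‖ ≤ ‖u - v‖ := by
  rw [Submodule.starProjection_minimal]
  exact ciInf_le ⟨0, fun _ ⟨_, h⟩ => h ▸ norm_nonneg _⟩ (⟨v, hv⟩ : K)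

theorem sub_mem_of_gradient_steps (V : Submodule ℝ E) (α : ℕ → ℝ) (D : ℕ → Finset (E × ℝ))
    (hD : ∀ t, ∀ p ∈ D t, p.1 ∈ V) (θ : ℕ → E)
    (hrec : ∀ t, θ (t + 1) = θ t - α t • ∑ p ∈ D t, (⟪θ t, p.1⟫ - p.2) • p.1) (t : ℕ) :
    θ t - θ 0 ∈ V := by
  induction t with
  | zero => simp
  | succ t ih =>
    have hstep : ∑ p ∈ D t, (⟪θ t, p.1⟫ - p.2) • p.1 ∈ V :=
      V.sum_mem fun p hp => V.smul_mem _ (hD t p hp)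
    rw [hrec t, sub_right_comm]
    exact V.sub_mem ih (V.smul_mem _ hstep)

/-- Optimality of the projective residual update among gradient-based updates:
with `θ_res = θ_full + P_V (θ_lko - θ_full)`, `V = span(x₁,…,x_k)`, any
gradient-based update `θ_approx = θ T` using only feature vectors among
`x₁,…,x_k` satisfies `‖θ_lko - θ_res‖ ≤ ‖θ_lko - θ_approx‖`. -/
theorem stmt_6 {d k : ℕ} (x : Fin k → EuclideanSpace ℝ (Fin d))
    (θfull θlko : EuclideanSpace ℝ (Fin d)) (T : ℕ) (α : ℕ → ℝ)
    (D : ℕ → Finset (EuclideanSpace ℝ (Fin d) × ℝ))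
    (hD : ∀ t, ∀ p ∈ D t, p.1 ∈ Set.range x)
    (θ : ℕ → EuclideanSpace ℝ (Fin d)) (h0 : θ 0 = θfull)
    (hrec : ∀ t, θ (t + 1) = θ t - α t • ∑ p ∈ D t, (⟪θ t, p.1⟫ - p.2) • p.1) :
    ‖θlko - (θfull +
        (Submodule.orthogonalProjectionOnto (Submodule.span ℝ (Set.range x)) (θlko - θfull) :
          EuclideanSpace ℝ (Fin d)))‖ ≤ ‖θlko - θ T‖ := by
  set V := Submodule.span ℝ (Set.range x)
  have hθT : θ T - θfull ∈ V := h0 ▸ sub_mem_of_gradient_steps V α D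
    (fun t p hp => Submodule.subset_span (hD t p hp)) θ hrec T
  have hres : θlko - (θfull + (V.orthogonalProjectionOnto (θlko - θfull) : _))
      = (θlko - θfull) - V.starProjection (θlko - θfull) := by
    rw [Submodule.starProjection_apply]; abel
  have happrox : θlko - θ T = (θlko - θfull) - (θ T - θfull) := by abel
  rw [hres, happrox]
  exact V.norm_sub_starProjection_le _ hθT
end

section
/- Let X be an n-by-d real matrix with rows x_1^T, ..., x_n^T such that X^T X is invertible, let Y = (y_1,...,y_n)^T in R^n, and let H = X (X^T X)^{-1} X^T be the hat matrix. Fix k < n and suppose theta_lko in R^d satisfies the leave-k-out normal equations sum_{i=k+1}^n (<theta_lko, x_i> - y_i) x_i = 0 (i.e. theta_lko minimizes the leave-k-out least-squares loss). Define Y' in R^n by Y'_i = <theta_lko, x_i> for i <= k and Y'_i = y_i for i > k. Then X theta_lko = H Y'. -/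
open Matrix

/-- Leave-`k`-out fitted values via the hat matrix: if `θ_lko` satisfies the
leave-`k`-out normal equations and `Y'` agrees with `Y` on the retained points
and with the LKO predictions on the first `k` points, then `X θ_lko = H Y'`,
where `H = X (Xᵀ X)⁻¹ Xᵀ` is the hat matrix. -/
theorem stmt_7 {n d k : ℕ} (X : Matrix (Fin n) (Fin d) ℝ) (Y : Fin n → ℝ)
    (hX : IsUnit (Xᵀ * X)) (hk : k < n) (θlko : Fin d → ℝ)
    (hθ : ∑ i ∈ Finset.univ.filter (fun i : Fin n => k ≤ (i : ℕ)),
      (X.mulVec θlko i - Y i) • X i = 0) :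
    X.mulVec θlko =
      (X * (Xᵀ * X)⁻¹ * Xᵀ).mulVec
        (fun i : Fin n => if (i : ℕ) < k then X.mulVec θlko i else Y i) := by
  set v : Fin n → ℝ := fun i : Fin n => if (i : ℕ) < k then X.mulVec θlko i else Y i with hv
  have key : Xᵀ.mulVec v = (Xᵀ * X).mulVec θlko := by
    rw [← Matrix.mulVec_mulVec]
    funext j
    have h0 := congrFun hθ j
    simp only [Finset.sum_apply, Pi.smul_apply, smul_eq_mul, Pi.zero_apply] at h0
    show ∑ i, X i j * v i = ∑ i, X i j * X.mulVec θlko i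
    have hterm : ∀ i : Fin n, X i j * v i - X i j * X.mulVec θlko i
        = if k ≤ (i : ℕ) then X i j * (Y i - X.mulVec θlko i) else 0 := by
      intro i
      by_cases h : (i : ℕ) < k
      · simp [hv, h, Nat.not_le.mpr h]
      · simp only [hv]
        rw [if_neg h, if_pos (Nat.le_of_not_lt h)]
        ring
    have hsum : ∑ i, (X i j * v i - X i j * X.mulVec θlko i) = 0 := by
      rw [Finset.sum_congr rfl (fun i _ => hterm i), Finset.sum_ite,
        Finset.sum_const_zero, add_zero]
      have heq : ∑ i ∈ Finset.univ.filter (fun i : Fin n => k ≤ (i : ℕ)),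
          X i j * (Y i - X.mulVec θlko i)
          = -∑ i ∈ Finset.univ.filter (fun i : Fin n => k ≤ (i : ℕ)),
          (X.mulVec θlko i - Y i) * X i j := by
        rw [← Finset.sum_neg_distrib]
        exact Finset.sum_congr rfl (fun i _ => by ring)
      rw [heq, h0, neg_zero]
    rw [Finset.sum_sub_distrib] at hsum
    linarith
  have hdet : IsUnit (Xᵀ * X).det := (Matrix.isUnit_iff_isUnit_det _).mp hX
  conv_rhs => rw [← Matrix.mulVec_mulVec, key, Matrix.mulVec_mulVec, Matrix.mul_assoc,
    Matrix.nonsing_inv_mul _ hdet, Matrix.mul_one]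
end

section
/- Let X be an n-by-d real matrix with rows x_1^T, ..., x_n^T such that X^T X is invertible, let Y = (y_1,...,y_n)^T in R^n, let H = X (X^T X)^{-1} X^T be the hat matrix with entries h_{ij}, and let theta_full = (X^T X)^{-1} X^T Y. Fix k < n and suppose theta_lko in R^d satisfies sum_{i=k+1}^n (<theta_lko, x_i> - y_i) x_i = 0. Define the full-model residuals r_i = y_i - <theta_full, x_i> and the leave-k-out residuals r'_i = y_i - <theta_lko, x_i>. Then for every i with 1 <= i <= k: (1 - h_{ii}) r'_i = r_i + sum_{j=1, j != i}^{k} h_{ij} r'_j. -/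
open Matrix

/-- The linear system relating full-model residuals `r` and leave-`k`-out
residuals `r'` via the hat matrix entries: for each deleted index `i`,
`(1 - h_{ii}) r'_i = r_i + ∑_{j ≤ k, j ≠ i} h_{ij} r'_j`. -/
theorem stmt_8 {n d k : ℕ} (X : Matrix (Fin n) (Fin d) ℝ) (Y : Fin n → ℝ)
    (hX : IsUnit (Xᵀ * X)) (hk : k < n) (θlko : Fin d → ℝ)
    (hθ : ∑ i ∈ Finset.univ.filter (fun i : Fin n => k ≤ (i : ℕ)),
      (X.mulVec θlko i - Y i) • X i = 0) :
    ∀ i : Fin n, (i : ℕ) < k →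
      (1 - (X * (Xᵀ * X)⁻¹ * Xᵀ) i i) *
          (Y i - X.mulVec θlko i) =
        (Y i - X.mulVec (((Xᵀ * X)⁻¹ * Xᵀ).mulVec Y) i) +
          ∑ j ∈ Finset.univ.filter (fun j : Fin n => (j : ℕ) < k ∧ j ≠ i),
            (X * (Xᵀ * X)⁻¹ * Xᵀ) i j * (Y j - X.mulVec θlko j) := by
  intro i hi
  have hdet : IsUnit (Xᵀ * X).det := (Matrix.isUnit_iff_isUnit_det _).mp hX
  have hinv : (Xᵀ * X)⁻¹ * (Xᵀ * X) = 1 := Matrix.nonsing_inv_mul _ hdet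
  set A := (Xᵀ * X)⁻¹ with hA
  set H := X * A * Xᵀ with hHdef
  set θf := (A * Xᵀ).mulVec Y with hθf
  set r' : Fin n → ℝ := fun j => Y j - X.mulVec θlko j with hr'
  -- key identity: (H r')_i = r'_i - r_i
  have h1 : H.mulVec Y = X.mulVec θf := by
    rw [hθf, Matrix.mulVec_mulVec, hHdef, Matrix.mul_assoc]
  have h2 : H.mulVec (X.mulVec θlko) = X.mulVec θlko := by
    rw [Matrix.mulVec_mulVec]
    congr 1
    rw [hHdef, Matrix.mul_assoc (X * A), Matrix.mul_assoc X A, hinv, Matrix.mul_one]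
  have hr'eq : r' = Y - X.mulVec θlko := by
    funext j; simp [hr']
  have key : (H.mulVec r') i = r' i - (Y i - X.mulVec θf i) := by
    rw [hr'eq, Matrix.mulVec_sub, h1, h2]
    simp
  -- the sum over j ≥ k vanishes
  have hl : ∀ l, ∑ j ∈ Finset.univ.filter (fun j : Fin n => k ≤ (j : ℕ)),
      (X.mulVec θlko j - Y j) * X j l = 0 := by
    intro l
    have := congrFun hθ l
    simpa [Finset.sum_apply] using this
  have hHij : ∀ j, H i j = ∑ l, (X * A) i l * X j l := by
    intro j
    rw [hHdef, Matrix.mul_apply]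
    simp [Matrix.transpose_apply]
  have zero2 : ∑ j ∈ Finset.univ.filter (fun j : Fin n => k ≤ (j : ℕ)), H i j * r' j = 0 := by
    simp_rw [hHij, Finset.sum_mul]
    rw [Finset.sum_comm]
    apply Finset.sum_eq_zero
    intro l _
    have h0 := hl l
    have hterm : ∀ j ∈ Finset.univ.filter (fun j : Fin n => k ≤ (j : ℕ)),
        (X * A) i l * X j l * r' j = (X * A) i l * -((X.mulVec θlko j - Y j) * X j l) := by
      intro j _; simp only [hr']; ring
    rw [Finset.sum_congr rfl hterm, ← Finset.mul_sum, Finset.sum_neg_distrib, h0]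
    ring
  -- split the full sum
  have hmv : (H.mulVec r') i = ∑ j, H i j * r' j := by
    rw [Matrix.mulVec, dotProduct]
  have hsplit : ∑ j, H i j * r' j =
      (∑ j ∈ Finset.univ.filter (fun j : Fin n => (j : ℕ) < k), H i j * r' j)
      + ∑ j ∈ Finset.univ.filter (fun j : Fin n => k ≤ (j : ℕ)), H i j * r' j := by
    rw [← Finset.sum_filter_add_sum_filter_not Finset.univ (fun j : Fin n => (j : ℕ) < k)]
    congr 1
    apply Finset.sum_congr _ (fun _ _ => rfl)
    ext j; simp [not_lt]
  have hmem : i ∈ Finset.univ.filter (fun j : Fin n => (j : ℕ) < k) := by simp [hi]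
  have herase : Finset.univ.filter (fun j : Fin n => (j : ℕ) < k ∧ j ≠ i) =
      (Finset.univ.filter (fun j : Fin n => (j : ℕ) < k)).erase i := by
    ext j; simp [Finset.mem_erase, and_comm]
  have hsum : ∑ j ∈ Finset.univ.filter (fun j : Fin n => (j : ℕ) < k), H i j * r' j =
      H i i * r' i + ∑ j ∈ Finset.univ.filter (fun j : Fin n => (j : ℕ) < k ∧ j ≠ i),
        H i j * r' j := by
    rw [herase]
    exact (Finset.add_sum_erase _ (fun j => H i j * r' j) hmem).symm
  have hfinal := key
  rw [hmv, hsplit, zero2, add_zero, hsum] at hfinal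
  have : (1 - H i i) * r' i = (Y i - X.mulVec θf i)
      + ∑ j ∈ Finset.univ.filter (fun j : Fin n => (j : ℕ) < k ∧ j ≠ i), H i j * r' j := by
    linarith
  simpa [hr'] using this
end

section
/- Let X be an n-by-d real matrix with rows x_1^T, ..., x_n^T, let Y in R^n, let W = diag(w_1, ..., w_n) with w_i >= 0, and let lambda > 0, so that X^T W X + lambda I is invertible. Let H = X (X^T W X + lambda I)^{-1} X^T W. Fix k < n and suppose theta_lko in R^d satisfies the weighted ridge leave-k-out first-order condition sum_{i=k+1}^n w_i (<theta_lko, x_i> - y_i) x_i + lambda theta_lko = 0. Define Y' in R^n by Y'_i = <theta_lko, x_i> for i <= k and Y'_i = y_i for i > k. Then X theta_lko = H Y'. -/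
open Matrix

/-- Generalization of the leave-`k`-out hat-matrix identity to weighted, ridge
regularized least squares: if `θ_lko` satisfies the weighted ridge leave-`k`-out
first-order condition, then `X θ_lko = H Y'` where
`H = X (Xᵀ W X + λ I)⁻¹ Xᵀ W` and `Y'` replaces the first `k` responses by the
LKO predictions. -/
theorem stmt_9 {n d k : ℕ} (X : Matrix (Fin n) (Fin d) ℝ) (Y : Fin n → ℝ)
    (w : Fin n → ℝ) (hw : ∀ i, 0 ≤ w i) (lam : ℝ) (hlam : 0 < lam)
    (hinv : IsUnit (Xᵀ * Matrix.diagonal w * X + lam • (1 : Matrix (Fin d) (Fin d) ℝ)))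
    (hk : k < n) (θlko : Fin d → ℝ)
    (hθ : (∑ i ∈ Finset.univ.filter (fun i : Fin n => k ≤ (i : ℕ)),
        (w i * (X.mulVec θlko i - Y i)) • X i) + lam • θlko = 0) :
    X.mulVec θlko =
      (X * (Xᵀ * Matrix.diagonal w * X + lam • (1 : Matrix (Fin d) (Fin d) ℝ))⁻¹ *
          Xᵀ * Matrix.diagonal w).mulVec
        (fun i : Fin n => if (i : ℕ) < k then X.mulVec θlko i else Y i) := by
  set A := Xᵀ * Matrix.diagonal w * X + lam • (1 : Matrix (Fin d) (Fin d) ℝ) with hA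
  set Y' : Fin n → ℝ := fun i => if (i : ℕ) < k then X.mulVec θlko i else Y i with hY'
  have key : A.mulVec θlko = (Xᵀ * Matrix.diagonal w).mulVec Y' := by
    funext j
    have hθj := congrFun hθ j
    simp only [Finset.sum_apply, Pi.add_apply, Pi.smul_apply, smul_eq_mul,
      Pi.zero_apply] at hθj
    have expand : ∀ v : Fin n → ℝ, (Xᵀ * Matrix.diagonal w).mulVec v j
        = ∑ i, X i j * (w i * v i) := by
      intro v
      rw [← Matrix.mulVec_mulVec]
      simp only [Matrix.mulVec, dotProduct, Matrix.transpose_apply,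
        Matrix.diagonal_apply, mul_ite, mul_zero, ite_mul, zero_mul]
      refine Finset.sum_congr rfl fun i _ => ?_
      rw [Finset.sum_ite_eq Finset.univ i (fun x => w i * v x)]
      simp [mul_comm, mul_left_comm]
    have hL : A.mulVec θlko j
        = (∑ i, X i j * (w i * X.mulVec θlko i)) + lam * θlko j := by
      rw [hA, Matrix.add_mulVec, Matrix.smul_mulVec, Matrix.one_mulVec,
        ← Matrix.mulVec_mulVec]
      simp only [Pi.add_apply, Pi.smul_apply, smul_eq_mul, expand]
    rw [hL, expand]
    rw [← Finset.sum_filter_add_sum_filter_not Finset.univ (fun i : Fin n => (i : ℕ) < k)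
        (fun i => X i j * (w i * X.mulVec θlko i)),
      ← Finset.sum_filter_add_sum_filter_not Finset.univ (fun i : Fin n => (i : ℕ) < k)
        (fun i => X i j * (w i * Y' i))]
    have e2 : Finset.univ.filter (fun i : Fin n => ¬ (i : ℕ) < k)
        = Finset.univ.filter (fun i : Fin n => k ≤ (i : ℕ)) := by
      simp [not_lt]
    have e1 : ∑ i ∈ Finset.univ.filter (fun i : Fin n => (i : ℕ) < k),
        X i j * (w i * Y' i)
        = ∑ i ∈ Finset.univ.filter (fun i : Fin n => (i : ℕ) < k),
          X i j * (w i * X.mulVec θlko i) := by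
      refine Finset.sum_congr rfl fun i hi => ?_
      have := (Finset.mem_filter.mp hi).2
      simp [hY', this]
    have e3 : ∑ i ∈ Finset.univ.filter (fun i : Fin n => k ≤ (i : ℕ)),
        X i j * (w i * Y' i)
        = ∑ i ∈ Finset.univ.filter (fun i : Fin n => k ≤ (i : ℕ)),
          X i j * (w i * Y i) := by
      refine Finset.sum_congr rfl fun i hi => ?_
      have := (Finset.mem_filter.mp hi).2
      simp [hY', Nat.not_lt.mpr this]
    rw [e1, e2, e3]
    have hsplit : ∑ x ∈ Finset.univ.filter (fun i : Fin n => k ≤ (i : ℕ)),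
        w x * (X.mulVec θlko x - Y x) * X x j
        = (∑ x ∈ Finset.univ.filter (fun i : Fin n => k ≤ (i : ℕ)),
            X x j * (w x * X.mulVec θlko x))
          - ∑ x ∈ Finset.univ.filter (fun i : Fin n => k ≤ (i : ℕ)),
            X x j * (w x * Y x) := by
      rw [← Finset.sum_sub_distrib]
      exact Finset.sum_congr rfl fun i _ => by ring
    linarith [hθj, hsplit]
  have hdet : IsUnit A.det := (Matrix.isUnit_iff_isUnit_det A).mp hinv
  have h1 : X.mulVec θlko = X.mulVec ((A⁻¹ * A).mulVec θlko) := by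
    rw [Matrix.nonsing_inv_mul A hdet, Matrix.one_mulVec]
  rw [h1, ← Matrix.mulVec_mulVec, key, Matrix.mulVec_mulVec, Matrix.mulVec_mulVec,
    Matrix.mul_assoc (X * A⁻¹) Xᵀ (Matrix.diagonal w)]
end

section
/- Let X be an n-by-d real matrix with X^T X invertible, Y in R^n, let x_1 in R^d be nonzero, and let y_1 in R. Let theta_loo = (X^T X)^{-1} X^T Y, and for lambda > 0 let theta_full(lambda) = (X^T X + lambda^2 x_1 x_1^T)^{-1} (X^T Y + lambda^2 y_1 x_1) (this inverse exists for all lambda). Then as lambda tends to infinity, theta_full(lambda) - theta_loo converges to C' (X^T X)^{-1} x_1, where C' = (y_1 - x_1^T (X^T X)^{-1} X^T Y) / (x_1^T (X^T X)^{-1} x_1). -/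
/-!
With `A = Xᵀ X` and `θ_loo = A⁻¹ Xᵀ Y`, the Sherman–Morrison formula computes the full fit exactly:
`θ_full(λ) - θ_loo = λ² (y₁ - x₁ ⬝ θ_loo) / (1 + λ² x₁ ⬝ A⁻¹ x₁) • A⁻¹ x₁`.
Since `A` is positive definite, so is `A⁻¹`, hence `x₁ ⬝ A⁻¹ x₁ > 0`: the denominator never
vanishes and the scalar factor tends to `(y₁ - x₁ ⬝ θ_loo) / (x₁ ⬝ A⁻¹ x₁)`.
-/

open Matrix Filter

namespace Matrix

variable {m K : Type*} [Fintype m] [DecidableEq m] [Field K]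

theorem mulVec_inv_mulVec {A : Matrix m m K} (hA : IsUnit A.det) (b : m → K) :
    A *ᵥ (A⁻¹ *ᵥ b) = b := by
  rw [mulVec_mulVec, mul_nonsing_inv A hA, one_mulVec]

theorem isUnit_det_add_vecMulVec {A : Matrix m m K} (hA : IsUnit A.det) (u v : m → K)
    (h : 1 + v ⬝ᵥ A⁻¹ *ᵥ u ≠ 0) : IsUnit (A + vecMulVec u v).det := by
  have hdet : (1 + replicateRow Unit v * A⁻¹ * replicateCol Unit u).det =
      1 + v ⬝ᵥ A⁻¹ *ᵥ u := by
    rw [det_unique, Matrix.mul_assoc, ← replicateCol_mulVec, add_apply, one_apply_eq,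
      replicateRow_mul_replicateCol_apply]
  rw [vecMulVec_eq Unit, det_add_replicateCol_mul_replicateRow hA, hdet]
  exact hA.mul (isUnit_iff_ne_zero.mpr h)

/-- The Sherman–Morrison formula, applied to a vector. -/
theorem inv_add_vecMulVec_mulVec {A : Matrix m m K} (hA : IsUnit A.det) (u v b : m → K)
    (h : 1 + v ⬝ᵥ A⁻¹ *ᵥ u ≠ 0) :
    (A + vecMulVec u v)⁻¹ *ᵥ b =
      A⁻¹ *ᵥ b - ((v ⬝ᵥ A⁻¹ *ᵥ b) / (1 + v ⬝ᵥ A⁻¹ *ᵥ u)) • A⁻¹ *ᵥ u := by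
  set t := (v ⬝ᵥ A⁻¹ *ᵥ b) / (1 + v ⬝ᵥ A⁻¹ *ᵥ u)
  have ht : t * (1 + v ⬝ᵥ A⁻¹ *ᵥ u) = v ⬝ᵥ A⁻¹ *ᵥ b := div_mul_cancel₀ _ h
  have hsolve : (A + vecMulVec u v) *ᵥ (A⁻¹ *ᵥ b - t • A⁻¹ *ᵥ u) = b := by
    rw [add_mulVec, vecMulVec_mulVec, op_smul_eq_smul, mulVec_sub, mulVec_smul,
      mulVec_inv_mulVec hA, mulVec_inv_mulVec hA, dotProduct_sub, dotProduct_smul, smul_eq_mul]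
    ext i
    simp only [Pi.add_apply, Pi.sub_apply, Pi.smul_apply, smul_eq_mul]
    linear_combination (-u i) * ht
  rw [← hsolve, mulVec_mulVec, nonsing_inv_mul _ (isUnit_det_add_vecMulVec hA u v h),
    one_mulVec, hsolve]

theorem inv_add_smul_vecMulVec_mulVec_sub {A : Matrix m m K} (hA : IsUnit A.det)
    (x b : m → K) (μ y : K) (h : 1 + μ * (x ⬝ᵥ A⁻¹ *ᵥ x) ≠ 0) :
    (A + μ • vecMulVec x x)⁻¹ *ᵥ (b + (μ * y) • x) - A⁻¹ *ᵥ b =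
      (μ * (y - x ⬝ᵥ A⁻¹ *ᵥ b) / (1 + μ * (x ⬝ᵥ A⁻¹ *ᵥ x))) • A⁻¹ *ᵥ x := by
  rw [← smul_vecMulVec, inv_add_vecMulVec_mulVec hA _ _ _ (by rwa [mulVec_smul, dotProduct_smul]),
    mulVec_smul, dotProduct_smul, mulVec_add, mulVec_smul, dotProduct_add, dotProduct_smul]
  match_scalars
  · ring
  · simp only [smul_eq_mul]
    field_simp
    ring

end Matrix

theorem tendsto_mul_div_one_add_mul_atTop {s : ℝ} (hs : 0 < s) (a : ℝ) :
    Tendsto (fun μ : ℝ => μ * a / (1 + μ * s)) atTop (nhds (a / s)) := by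
  have h : Tendsto (fun μ : ℝ => a / (μ⁻¹ + s)) atTop (nhds (a / (0 + s))) :=
    tendsto_const_nhds.div (tendsto_inv_atTop_zero.add tendsto_const_nhds) (by linarith)
  rw [zero_add] at h
  refine h.congr' ?_
  filter_upwards [eventually_gt_atTop 0] with μ hμ
  field_simp

/-- Limiting behavior of the exact parameter update when deleting a scaled
outlier `(λ x₁, λ y₁)`: as `λ → ∞`,
`θ_full(λ) - θ_loo → C' (Xᵀ X)⁻¹ x₁` with
`C' = (y₁ - x₁ᵀ (Xᵀ X)⁻¹ Xᵀ Y) / (x₁ᵀ (Xᵀ X)⁻¹ x₁)`. -/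
theorem stmt_14 {n d : ℕ} (X : Matrix (Fin n) (Fin d) ℝ) (hX : IsUnit (Xᵀ * X))
    (Y : Fin n → ℝ) (x₁ : Fin d → ℝ) (hx₁ : x₁ ≠ 0) (y₁ : ℝ) :
    Tendsto
      (fun lam : ℝ =>
        (X.transpose * X + lam ^ 2 • vecMulVec x₁ x₁)⁻¹.mulVec
            (Xᵀ.mulVec Y + (lam ^ 2 * y₁) • x₁)
          - ((Xᵀ * X)⁻¹ * Xᵀ).mulVec Y)
      atTop
      (nhds
        (((y₁ - x₁ ⬝ᵥ ((Xᵀ * X)⁻¹ * Xᵀ).mulVec Y) /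
            (x₁ ⬝ᵥ (Xᵀ * X)⁻¹.mulVec x₁)) • (Xᵀ * X)⁻¹.mulVec x₁)) := by
  have hA : (Xᵀ * X).PosDef := by
    rw [← conjTranspose_eq_transpose_of_trivial] at hX ⊢
    exact (posSemidef_conjTranspose_mul_self X).posDef_iff_isUnit.mpr hX
  have hs : 0 < x₁ ⬝ᵥ (Xᵀ * X)⁻¹ *ᵥ x₁ := by
    simpa using hA.inv.dotProduct_mulVec_pos hx₁
  have hupdate (lam : ℝ) := inv_add_smul_vecMulVec_mulVec_sub
    ((isUnit_iff_isUnit_det _).mp hX) x₁ (Xᵀ *ᵥ Y) (lam ^ 2) y₁ (by positivity)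
  simp only [← mulVec_mulVec, hupdate]
  exact ((tendsto_mul_div_one_add_mul_atTop hs _).comp
    (tendsto_pow_atTop two_ne_zero)).smul_const _
end

section
/- Let X be an n-by-d real matrix with X^T X invertible, Y in R^n, let x_1 in R^d be nonzero, and let y_1 in R. For lambda > 0 let theta_full(lambda) = (X^T X + lambda^2 x_1 x_1^T)^{-1} (X^T Y + lambda^2 y_1 x_1). Then as lambda tends to infinity, lambda^2 * (<x_1, theta_full(lambda)> - y_1) converges to (x_1^T (X^T X)^{-1} X^T Y - y_1) / (x_1^T (X^T X)^{-1} x_1). -/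
open Matrix Filter

/-!
Write `A = XᵀX`, `c = ⟨x₁, A⁻¹x₁⟩ > 0` and `b = ⟨x₁, A⁻¹XᵀY⟩`. Since `θ = θ_full(λ)` solves
`Aθ + λ²⟨x₁, θ⟩x₁ = XᵀY + λ²y₁x₁`, pairing `θ = A⁻¹XᵀY + λ²(y₁ - ⟨x₁, θ⟩)A⁻¹x₁` with `x₁`
gives the closed form `⟨x₁, θ⟩ - y₁ = (b - y₁) / (1 + λ²c)`, and
`λ²(b - y₁) / (1 + λ²c) = (b - y₁) / (λ⁻² + c) → (b - y₁) / c`.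
-/

theorem Matrix.dotProduct_inv_add_smul_vecMulVec_mulVec_sub_mul {ι K : Type*} [Fintype ι]
    [DecidableEq ι] [CommRing K] {A : Matrix ι ι K} (hA : IsUnit A)
    {x : ι → K} {t : K} (hB : IsUnit (A + t • vecMulVec x x)) (v : ι → K) (y : K) :
    (x ⬝ᵥ (A + t • vecMulVec x x)⁻¹ *ᵥ (v + (t * y) • x) - y) * (1 + t * (x ⬝ᵥ A⁻¹ *ᵥ x)) =
      x ⬝ᵥ A⁻¹ *ᵥ v - y := by
  set θ := (A + t • vecMulVec x x)⁻¹ *ᵥ (v + (t * y) • x)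
  have hBθ : (A + t • vecMulVec x x) *ᵥ θ = v + (t * y) • x := by
    simp only [θ, mulVec_mulVec, mul_nonsing_inv _ ((isUnit_iff_isUnit_det _).mp hB),
      one_mulVec]
  have hAθ : A *ᵥ θ + (t * (x ⬝ᵥ θ)) • x = v + (t * y) • x := by
    rw [← hBθ, add_mulVec, smul_mulVec, vecMulVec_mulVec, op_smul_eq_smul, smul_smul]
  have hθ : θ = A⁻¹ *ᵥ v + (t * (y - x ⬝ᵥ θ)) • A⁻¹ *ᵥ x := by
    have := congrArg (A⁻¹ *ᵥ ·) hAθ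
    simp only [mulVec_add, mulVec_smul, mulVec_mulVec,
      nonsing_inv_mul _ ((isUnit_iff_isUnit_det _).mp hA), one_mulVec] at this
    rw [mul_sub, sub_smul, ← add_sub_assoc, ← this, add_sub_cancel_right]
  have hdot := congrArg (x ⬝ᵥ ·) hθ
  simp only [dotProduct_add, dotProduct_smul, smul_eq_mul] at hdot
  linear_combination hdot

theorem tendsto_sq_mul_div_one_add_sq_mul (a : ℝ) {c : ℝ} (hc : c ≠ 0) :
    Tendsto (fun lam : ℝ => lam ^ 2 * (a / (1 + lam ^ 2 * c))) atTop (nhds (a / c)) := by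
  have heq : (fun lam : ℝ => a / ((lam ^ 2)⁻¹ + c)) =ᶠ[atTop]
      fun lam => lam ^ 2 * (a / (1 + lam ^ 2 * c)) := by
    filter_upwards [eventually_ne_atTop 0] with lam hlam
    have hlam2 : lam ^ 2 ≠ 0 := pow_ne_zero 2 hlam
    rw [mul_div_assoc', ← mul_div_mul_left a _ hlam2, mul_add, mul_inv_cancel₀ hlam2]
  have hlim := tendsto_const_nhds (x := a) |>.div
    ((tendsto_pow_atTop two_ne_zero).inv_tendsto_atTop.add (tendsto_const_nhds (x := c)))
    (by simpa using hc)
  rw [zero_add] at hlim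
  exact hlim.congr' heq

theorem Matrix.posDef_transpose_mul_self_of_isUnit {m n : Type*} [Fintype m] [Fintype n]
    [DecidableEq n] {X : Matrix m n ℝ} (hX : IsUnit (Xᵀ * X)) : (Xᵀ * X).PosDef := by
  have hinj : Function.Injective (Xᵀ.mulVec ∘ X.mulVec) := by
    simpa only [Function.comp_def, mulVec_mulVec] using mulVec_injective_iff_isUnit.mpr hX
  simpa using PosDef.conjTranspose_mul_self X hinj.of_comp

theorem Matrix.PosDef.isUnit_add_smul_vecMulVec_self {n : Type*} [Fintype n] [DecidableEq n]
    {A : Matrix n n ℝ} (hA : A.PosDef) (x : n → ℝ) {t : ℝ} (ht : 0 ≤ t) :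
    IsUnit (A + t • vecMulVec x x) :=
  (hA.add_posSemidef ((posSemidef_vecMulVec_self_star x).smul ht)).isUnit

/-- Limiting behavior of the (rescaled) full-model residual on a scaled outlier:
as `λ → ∞`, `λ² (⟨x₁, θ_full(λ)⟩ - y₁)` converges to
`(x₁ᵀ (Xᵀ X)⁻¹ Xᵀ Y - y₁) / (x₁ᵀ (Xᵀ X)⁻¹ x₁)`. -/
theorem stmt_15 {n d : ℕ} (X : Matrix (Fin n) (Fin d) ℝ) (hX : IsUnit (Xᵀ * X))
    (Y : Fin n → ℝ) (x₁ : Fin d → ℝ) (hx₁ : x₁ ≠ 0) (y₁ : ℝ) :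
    Tendsto
      (fun lam : ℝ =>
        lam ^ 2 *
          (x₁ ⬝ᵥ (Xᵀ * X + lam ^ 2 • vecMulVec x₁ x₁)⁻¹.mulVec
              (Xᵀ.mulVec Y + (lam ^ 2 * y₁) • x₁) - y₁))
      atTop
      (nhds ((x₁ ⬝ᵥ ((Xᵀ * X)⁻¹ * Xᵀ).mulVec Y - y₁) /
        (x₁ ⬝ᵥ (Xᵀ * X)⁻¹.mulVec x₁))) := by
  have hA := posDef_transpose_mul_self_of_isUnit hX
  have hc : 0 < x₁ ⬝ᵥ (Xᵀ * X)⁻¹ *ᵥ x₁ := by simpa using hA.inv.dotProduct_mulVec_pos hx₁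
  have hresidual : ∀ lam : ℝ,
      x₁ ⬝ᵥ (Xᵀ * X + lam ^ 2 • vecMulVec x₁ x₁)⁻¹ *ᵥ (Xᵀ *ᵥ Y + (lam ^ 2 * y₁) • x₁) - y₁ =
        (x₁ ⬝ᵥ ((Xᵀ * X)⁻¹ * Xᵀ) *ᵥ Y - y₁) / (1 + lam ^ 2 * (x₁ ⬝ᵥ (Xᵀ * X)⁻¹ *ᵥ x₁)) := by
    intro lam
    rw [eq_div_iff (by positivity), ← mulVec_mulVec]
    exact dotProduct_inv_add_smul_vecMulVec_mulVec_sub_mul hX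
      (hA.isUnit_add_smul_vecMulVec_self x₁ (sq_nonneg lam)) _ _
  simp only [hresidual]
  exact tendsto_sq_mul_div_one_add_sq_mul _ hc.ne'
end
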